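/- Let (V, Q) be an FBAS with top tier T. Then every minimal splitting set S of (V, Q) satisfies S ⊆ T. -/

import Mathlib

/-! A splitting set contains `M ∩ U` for a minimal quorum `M` and a quorum `U ≠ M`: shrink one
of the two witnessing quorums to a minimal quorum `M` inside it, and pair `M` with whichever of
the two quorums it differs from. Then `M ∩ U` is itself splitting, so a minimal splitting set
equals it and lies inside the minimal quorum `M`, hence inside the top tier. -/

open Finset

variable {α : Type*} [DecidableEq α]

/-- `U` is a quorum of the FBAS `(V, Q)`: a nonempty subset of `V` containing,
for every member `v`, some slice `q ∈ Q v` with `q ⊆ U`. -/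
def IsQuorum (V : Finset α) (Q : α → Finset (Finset α)) (U : Finset α) : Prop :=
  U ⊆ V ∧ U.Nonempty ∧ ∀ v ∈ U, ∃ q ∈ Q v, q ⊆ U

/-- A minimal quorum: a quorum none of whose proper subsets is a quorum. -/
def IsMinimalQuorum (V : Finset α) (Q : α → Finset (Finset α)) (U : Finset α) : Prop :=
  IsQuorum V Q U ∧ ∀ U' ⊂ U, ¬IsQuorum V Q U'

/-- A blocking set: a subset of `V` intersecting every quorum of `(V, Q)`. -/
def IsBlocking (V : Finset α) (Q : α → Finset (Finset α)) (B : Finset α) : Prop :=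
  B ⊆ V ∧ ∀ U, IsQuorum V Q U → (B ∩ U).Nonempty

/-- A minimal blocking set: a blocking set none of whose proper subsets is blocking. -/
def IsMinimalBlocking (V : Finset α) (Q : α → Finset (Finset α)) (B : Finset α) : Prop :=
  IsBlocking V Q B ∧ ∀ B' ⊂ B, ¬IsBlocking V Q B'

/-- A splitting set: a subset of `V` containing the intersection of two distinct quorums. -/
def IsSplitting (V : Finset α) (Q : α → Finset (Finset α)) (S : Finset α) : Prop :=
  S ⊆ V ∧ ∃ U₁ U₂, IsQuorum V Q U₁ ∧ IsQuorum V Q U₂ ∧ U₁ ≠ U₂ ∧ U₁ ∩ U₂ ⊆ S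

/-- A minimal splitting set: a splitting set none of whose proper subsets is splitting. -/
def IsMinimalSplitting (V : Finset α) (Q : α → Finset (Finset α)) (S : Finset α) : Prop :=
  IsSplitting V Q S ∧ ∀ S' ⊂ S, ¬IsSplitting V Q S'

/-- Well-formedness of an FBAS `(V, Q)`: every slice of every node `v ∈ V`
contains `v` and is a subset of `V`. -/
def WellFormed (V : Finset α) (Q : α → Finset (Finset α)) : Prop :=
  ∀ v ∈ V, ∀ q ∈ Q v, v ∈ q ∧ q ⊆ V

/-- `T` is the top tier of `(V, Q)`: the union of all minimal quorums. -/
def IsTopTier (V : Finset α) (Q : α → Finset (Finset α)) (T : Finset α) : Prop :=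
  ∀ v, v ∈ T ↔ ∃ U, IsMinimalQuorum V Q U ∧ v ∈ U

/-- `(V, Q)` enjoys quorum intersection: any two quorums share a node. -/
def QuorumIntersection (V : Finset α) (Q : α → Finset (Finset α)) : Prop :=
  ∀ U₁ U₂, IsQuorum V Q U₁ → IsQuorum V Q U₂ → (U₁ ∩ U₂).Nonempty

section

variable {V : Finset α} {Q : α → Finset (Finset α)}

omit [DecidableEq α] in
theorem IsQuorum.exists_isMinimalQuorum_subset {U : Finset α} (hU : IsQuorum V Q U) :
    ∃ M ⊆ U, IsMinimalQuorum V Q M := by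
  induction U using Finset.strongInduction with
  | H U ih =>
    by_cases hsmaller : ∃ U' ⊂ U, IsQuorum V Q U'
    · obtain ⟨U', hU'U, hU'⟩ := hsmaller
      obtain ⟨M, hMU', hM⟩ := ih U' hU'U hU'
      exact ⟨M, hMU'.trans hU'U.subset, hM⟩
    · exact ⟨U, subset_rfl, hU, fun U' hU'U hU' => hsmaller ⟨U', hU'U, hU'⟩⟩

omit [DecidableEq α] in
theorem IsMinimalQuorum.subset_of_isTopTier {T M : Finset α} (hT : IsTopTier V Q T)
    (hM : IsMinimalQuorum V Q M) : M ⊆ T :=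
  fun v hv => (hT v).mpr ⟨M, hM, hv⟩

theorem IsSplitting.exists_isMinimalQuorum_inter_subset {S : Finset α}
    (hS : IsSplitting V Q S) :
    ∃ M U, IsMinimalQuorum V Q M ∧ IsQuorum V Q U ∧ M ≠ U ∧ M ∩ U ⊆ S := by
  obtain ⟨-, U₁, U₂, hU₁, hU₂, hne, hsub⟩ := hS
  obtain ⟨M, hMU₁, hM⟩ := hU₁.exists_isMinimalQuorum_subset
  by_cases hMU₂ : M = U₂
  · subst hMU₂
    exact ⟨M, U₁, hM, hU₁, hne.symm, inter_comm M U₁ ▸ hsub⟩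
  · exact ⟨M, U₂, hM, hU₂, hMU₂, (inter_subset_inter_right hMU₁).trans hsub⟩

theorem IsMinimalSplitting.eq_of_isSplitting_of_subset {S S' : Finset α}
    (hS : IsMinimalSplitting V Q S) (hS' : IsSplitting V Q S') (hS'S : S' ⊆ S) : S' = S := by
  by_contra hne
  exact hS.2 S' (ssubset_of_subset_of_ne hS'S hne) hS'

end

theorem minimal_splitting_subset_top_tier_general
    (V : Finset α) (Q : α → Finset (Finset α))
    (T : Finset α) (hT : IsTopTier V Q T)
    (S : Finset α) (hS : IsMinimalSplitting V Q S) :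
    S ⊆ T := by
  obtain ⟨M, U, hM, hU, hMU, hMUS⟩ := hS.1.exists_isMinimalQuorum_inter_subset
  have hsplit : IsSplitting V Q (M ∩ U) :=
    ⟨inter_subset_left.trans hM.1.1, M, U, hM.1, hU, hMU, subset_rfl⟩
  rw [← hS.eq_of_isSplitting_of_subset hsplit hMUS]
  exact inter_subset_left.trans (hM.subset_of_isTopTier hT)

/-- every minimal splitting set is contained in the top tier. -/
theorem minimal_splitting_subset_top_tier
    (V : Finset α) (Q : α → Finset (Finset α)) (hwf : WellFormed V Q)
    (T : Finset α) (hT : IsTopTier V Q T)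
    (S : Finset α) (hS : IsMinimalSplitting V Q S) :
    S ⊆ T :=
  minimal_splitting_subset_top_tier_general V Q T hT S hS
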